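/- For the diameter gadget (G,w): if F(x,y)=1 then D_{G,w} ≤ max{2α, β} + n, and if F(x,y)=0 then D_{G,w} ≥ min{α+β, 3α}. -/

import Mathlib

open scoped ENNReal

set_option linter.unusedVariables false

/-- The length of a walk with respect to `ℝ≥0∞` edge weights. -/
noncomputable def wlen {V : Type*} (G : SimpleGraph V) (w : V → V → ℝ≥0∞) {u v : V}
    (p : G.Walk u v) : ℝ≥0∞ :=
  (p.darts.map fun d => w d.toProd.1 d.toProd.2).sum

/-- The weighted distance: the infimum of walk lengths. -/
noncomputable def wdist {V : Type*} (G : SimpleGraph V) (w : V → V → ℝ≥0∞) (u v : V) : ℝ≥0∞ :=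
  ⨅ p : G.Walk u v, wlen G w p

/-- Weighted diameter `D_{G,w} = max_{u,v} d_{G,w}(u,v)`. -/
noncomputable def wdiam {V : Type*} (G : SimpleGraph V) (w : V → V → ℝ≥0∞) : ℝ≥0∞ :=
  ⨆ u, ⨆ v, wdist G w u v

/-- Vertices of the diameter gadget. -/
inductive GV (h s ℓ : ℕ) where
  /-- tree node `t_{i,j}` encoded in heap order: `t m` is the tree node numbered `m+1`,
  i.e. the node of depth `i` and position `j` with `m + 1 = 2^i + (j-1)`. -/
  | t (m : Fin (2 ^ (h + 1) - 1))
  /-- path node `p_{i+1, j+1}` -/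
  | p (i : Fin (2 * s + ℓ)) (j : Fin (2 ^ h))
  /-- node `a_{i+1}` -/
  | a (i : Fin (2 ^ s))
  /-- node `b_{i+1}` -/
  | b (i : Fin (2 ^ s))
  /-- node `a^z_{j+1}` -/
  | ah (z : Bool) (j : Fin s)
  /-- node `b^z_{j+1}` -/
  | bh (z : Bool) (j : Fin s)
  /-- node `a*_{j+1}` -/
  | as (j : Fin ℓ)
  /-- node `b*_{j+1}` -/
  | bs (j : Fin ℓ)
  deriving DecidableEq, Fintype

/-- Base (oriented) adjacency of the diameter gadget.  Here `bin(i,j)` is realized as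
`Nat.testBit` on the 0-based index. -/
def gadgetAdj0 {h s ℓ : ℕ} : GV h s ℓ → GV h s ℓ → Prop
  | .t m, .t m' => 1 ≤ m.val ∧ m'.val + 1 = (m.val + 1) / 2
  | .t m, .p _ j => m.val + 1 = 2 ^ h + j.val
  | .p i j, .p i' j' => i = i' ∧ j.val = j'.val + 1
  | .ah z jj, .p i j => i.val = 2 * jj.val + (if z then 1 else 0) ∧ j.val = 0
  | .bh z jj, .p i j => i.val = 2 * jj.val + (if z then 0 else 1) ∧ j.val = 2 ^ h - 1
  | .as jj, .p i j => i.val = 2 * s + jj.val ∧ j.val = 0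
  | .bs jj, .p i j => i.val = 2 * s + jj.val ∧ j.val = 2 ^ h - 1
  | .a i, .ah z j => z = i.val.testBit j.val
  | .b i, .bh z j => z = i.val.testBit j.val
  | .a i, .a i' => i ≠ i'
  | .b i, .b i' => i ≠ i'
  | .a _, .as _ => True
  | .b _, .bs _ => True
  | _, _ => False

/-- The diameter gadget graph. -/
def gadget (h s ℓ : ℕ) : SimpleGraph (GV h s ℓ) where
  Adj u v := u ≠ v ∧ (gadgetAdj0 u v ∨ gadgetAdj0 v u)
  symm := ⟨fun u v huv => ⟨huv.1.symm, huv.2.symm⟩⟩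
  loopless := ⟨fun u hu => hu.1 rfl⟩

/-- The weights of the diameter gadget: tree edges, path edges and the attachment edges of
`a^z_j, b^z_j, a*_j, b*_j` to the paths have weight `1`; leaf–path edges, `a_i`–`a^{bin(i,j)}_j`,
`b_i`–`b^{bin(i,j)}_j` edges and clique edges have weight `α`; `a_i`–`a*_j` has weight `α` if
`x_{i,j}=1` and `β` otherwise, and similarly `b_i`–`b*_j` according to `y`. -/
def gadgetW {h s ℓ : ℕ} (x y : Fin (2 ^ s) → Fin ℓ → Bool) (α β : ℕ) :
    GV h s ℓ → GV h s ℓ → ℕ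
  | .a i, .as j => if x i j then α else β
  | .as j, .a i => if x i j then α else β
  | .b i, .bs j => if y i j then α else β
  | .bs j, .b i => if y i j then α else β
  | .t _, .p _ _ => α
  | .p _ _, .t _ => α
  | .a _, .ah _ _ => α
  | .ah _ _, .a _ => α
  | .b _, .bh _ _ => α
  | .bh _ _, .b _ => α
  | .a _, .a _ => α
  | .b _, .b _ => α
  | _, _ => 1

/-!
Upper bound: every vertex other than the tree nodes and the `a_i`, `b_i` lies within `2^h` of the
first node of some path, first nodes are pairwise within `2α` through the leaves, and `a_i` reaches
the first node of every path within `max(2α, β) + 1` (a node `a^z_j` of the wrong bit is reached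
through some `a_{i'}` of the clique). If `F(x, y) = 1`, then `a_i` and `b_{i'}` are joined through a
single path: the `a*_j`–`b*_j` path for a witness `j` when `i = i'`, and otherwise the path of a bit
in which `i` and `i'` differ. All these routes have length at most
`max(2α, β) + 2·2^h + 2h + 1 ≤ max(2α, β) + n`.

Lower bound: if row `i₀` has no witness, some potential changes along every edge by at most the
weight of the edge and rises from `0` at `a_{i₀}` to `min(α + β, 3α)` at `b_{i₀}`.
-/

open SimpleGraph

section WeightedGraph

variable {V : Type*} (G : SimpleGraph V) (w : V → V → ℝ≥0∞)

lemma wlen_cons {u v z : V} (huv : G.Adj u v) (p : G.Walk v z) :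
    wlen G w (Walk.cons huv p) = w u v + wlen G w p := by
  simp [wlen]

lemma wlen_append {u v z : V} (p : G.Walk u v) (q : G.Walk v z) :
    wlen G w (p.append q) = wlen G w p + wlen G w q := by
  simp [wlen, Walk.darts_append]

lemma wlen_reverse (hw : ∀ u v, w u v = w v u) {u v : V} (p : G.Walk u v) :
    wlen G w p.reverse = wlen G w p := by
  rw [wlen, wlen, Walk.darts_reverse, List.map_reverse, List.sum_reverse, List.map_map]
  congr 1
  exact List.map_congr_left fun d _ => hw _ _

lemma wdist_le_wlen {u v : V} (p : G.Walk u v) : wdist G w u v ≤ wlen G w p :=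
  iInf_le _ p

lemma wdist_self (u : V) : wdist G w u u = 0 :=
  nonpos_iff_eq_zero.mp (wdist_le_wlen G w Walk.nil)

lemma wdist_le_of_adj {u v : V} (huv : G.Adj u v) : wdist G w u v ≤ w u v := by
  simpa [wlen_cons, wlen] using wdist_le_wlen G w (Walk.cons huv Walk.nil)

lemma wdist_triangle (u v z : V) : wdist G w u z ≤ wdist G w u v + wdist G w v z := by
  simp only [wdist, ENNReal.iInf_add, ENNReal.add_iInf]
  exact le_iInf₂ fun q p => (wdist_le_wlen G w (p.append q)).trans_eq (wlen_append G w p q)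

lemma wdist_comm (hw : ∀ u v, w u v = w v u) (u v : V) : wdist G w u v = wdist G w v u := by
  have key : ∀ a b : V, wdist G w a b ≤ wdist G w b a := fun a b =>
    le_iInf fun q => (wdist_le_wlen G w q.reverse).trans_eq (wlen_reverse G w hw q)
  exact le_antisymm (key u v) (key v u)

lemma wdist_le_of_le_of_le {u v z : V} {a b c : ℕ} (huv : wdist G w u v ≤ a)
    (hvz : wdist G w v z ≤ b) (habc : a + b ≤ c) : wdist G w u z ≤ c :=
  calc wdist G w u z ≤ wdist G w u v + wdist G w v z := wdist_triangle G w u v z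
    _ ≤ a + b := add_le_add huv hvz
    _ ≤ c := mod_cast habc

lemma le_add_wdist_of_forall_adj (φ : V → ℝ≥0∞) (hφ : ∀ u v, G.Adj u v → φ v ≤ φ u + w u v)
    (u v : V) : φ v ≤ φ u + wdist G w u v := by
  rw [wdist, ENNReal.add_iInf]
  refine le_iInf fun p => ?_
  induction p with
  | nil => exact le_self_add
  | @cons a b c hab q ih =>
    calc φ c ≤ φ b + wlen G w q := ih
      _ ≤ φ a + w a b + wlen G w q := by gcongr; exact hφ a b hab
      _ = φ a + wlen G w (Walk.cons hab q) := by rw [wlen_cons, add_assoc]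

end WeightedGraph

namespace Gadget

variable {h s ℓ : ℕ}

def root : GV h s ℓ :=
  .t ⟨0, Nat.sub_pos_of_lt (Nat.one_lt_two_pow (Nat.succ_ne_zero h))⟩

lemma t_eq_root {m : Fin (2 ^ (h + 1) - 1)} (hm : m.val = 0) : (GV.t m : GV h s ℓ) = root :=
  congrArg GV.t (Fin.ext hm)

def leaf (k : ℕ) (hk : k < 2 ^ h) : GV h s ℓ :=
  .t ⟨2 ^ h - 1 + k, by rw [pow_succ]; omega⟩

def pathFirst (r : Fin (2 * s + ℓ)) : GV h s ℓ := .p r ⟨0, Nat.two_pow_pos h⟩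

def pathLast (r : Fin (2 * s + ℓ)) : GV h s ℓ := .p r ⟨2 ^ h - 1, by simp⟩

/-- The path starting at `a^z_{jj}`; it ends at `b^{!z}_{jj}`. -/
def bitRow (z : Bool) (jj : Fin s) : Fin (2 * s + ℓ) :=
  ⟨2 * jj + if z then 1 else 0, by have := jj.isLt; split <;> omega⟩

def starRow (j : Fin ℓ) : Fin (2 * s + ℓ) := ⟨2 * s + j, by omega⟩

lemma row_cases (r : Fin (2 * s + ℓ)) :
    (∃ z jj, r = bitRow z jj) ∨ ∃ j, r = starRow j := by
  by_cases hr : r.val < 2 * s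
  · refine Or.inl ⟨decide (r.val % 2 = 1), ⟨r.val / 2, by omega⟩, Fin.ext ?_⟩
    by_cases hodd : r.val % 2 = 1 <;> simp [bitRow, hodd] <;> omega
  · exact Or.inr ⟨⟨r.val - 2 * s, by omega⟩, Fin.ext (by simp [starRow]; omega)⟩

lemma exists_testBit_eq (z : Bool) (jj : Fin s) : ∃ i : Fin (2 ^ s), i.val.testBit jj = z := by
  cases z
  · exact ⟨⟨0, Nat.two_pow_pos s⟩, Nat.zero_testBit _⟩
  · exact ⟨⟨2 ^ jj.val, Nat.pow_lt_pow_right one_lt_two jj.isLt⟩, Nat.testBit_two_pow_self⟩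

lemma exists_testBit_ne {i i' : Fin (2 ^ s)} (hne : i ≠ i') :
    ∃ jj : Fin s, i.val.testBit jj ≠ i'.val.testBit jj := by
  obtain ⟨k, hk⟩ := Nat.exists_testBit_ne_of_ne (Fin.val_ne_of_ne hne)
  refine ⟨⟨k, ?_⟩, hk⟩
  by_contra hks
  have hpow : 2 ^ s ≤ 2 ^ k := Nat.pow_le_pow_right two_pos (by omega)
  exact hk (by rw [Nat.testBit_lt_two_pow (i.isLt.trans_le hpow),
    Nat.testBit_lt_two_pow (i'.isLt.trans_le hpow)])

lemma ne_of_gadgetAdj0 {u v : GV h s ℓ} (huv : gadgetAdj0 u v) : u ≠ v := by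
  rintro rfl
  cases u <;> simp_all [gadgetAdj0]
  omega

lemma gadget_adj_of_gadgetAdj0 {u v : GV h s ℓ} (huv : gadgetAdj0 u v) : (gadget h s ℓ).Adj u v :=
  ⟨ne_of_gadgetAdj0 huv, Or.inl huv⟩

lemma gadgetW_comm (x y : Fin (2 ^ s) → Fin ℓ → Bool) (α β : ℕ) (u v : GV h s ℓ) :
    gadgetW x y α β u v = gadgetW x y α β v u := by
  cases u <;> cases v <;> rfl


section Distances

variable {x y : Fin (2 ^ s) → Fin ℓ → Bool} {α β : ℕ}

local notation "δ" => wdist (gadget h s ℓ) (fun u v => ((gadgetW x y α β u v : ℕ) : ℝ≥0∞))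

lemma dist_comm (u v : GV h s ℓ) : δ u v = δ v u :=
  wdist_comm _ _ (fun u v => by rw [gadgetW_comm]) u v

lemma dist_le_of_adj0 {u v : GV h s ℓ} {c : ℕ} (huv : gadgetAdj0 u v)
    (hc : gadgetW x y α β u v ≤ c) : δ u v ≤ c :=
  (wdist_le_of_adj _ _ (gadget_adj_of_gadgetAdj0 huv)).trans (Nat.cast_le.mpr hc)

lemma dist_le_of_le {u v : GV h s ℓ} {c c' : ℕ} (huv : δ u v ≤ c) (hc : c ≤ c') : δ u v ≤ c' :=
  huv.trans (Nat.cast_le.mpr hc)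

lemma dist_p_succ (r : Fin (2 * s + ℓ)) (k : ℕ) (hk : k + 1 < 2 ^ h) :
    δ (.p r ⟨k + 1, hk⟩) (.p r ⟨k, by omega⟩) ≤ (1 : ℕ) :=
  dist_le_of_adj0 ⟨rfl, rfl⟩ le_rfl

lemma dist_p_pathFirst (r : Fin (2 * s + ℓ)) :
    ∀ (k : ℕ) (hk : k < 2 ^ h), δ (.p r ⟨k, hk⟩) (pathFirst r) ≤ k
  | 0, _ => by simp [pathFirst, wdist_self]
  | k + 1, hk => wdist_le_of_le_of_le _ _ (dist_p_succ r k hk) (dist_p_pathFirst r k _) (by omega)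

lemma dist_pathLast_pathFirst (r : Fin (2 * s + ℓ)) :
    δ (pathLast r : GV h s ℓ) (pathFirst r) ≤ (2 ^ h - 1 : ℕ) :=
  dist_p_pathFirst r _ _

lemma dist_t_parent (m : Fin (2 ^ (h + 1) - 1)) (hm : 0 < m.val) :
    δ (.t m) (.t ⟨(m + 1) / 2 - 1, by omega⟩) ≤ (1 : ℕ) :=
  dist_le_of_adj0 ⟨hm, by simp only; omega⟩ le_rfl

lemma dist_t_root_le (k : ℕ) (m : Fin (2 ^ (h + 1) - 1)) (hm : m.val + 1 < 2 ^ (k + 1)) :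
    δ (.t m) root ≤ k := by
  induction k generalizing m with
  | zero => simp [t_eq_root (show m.val = 0 by omega), wdist_self]
  | succ k ih =>
    obtain hm0 | hm0 := Nat.eq_zero_or_pos m.val
    · simp [t_eq_root hm0, wdist_self]
    · have := pow_succ 2 (k + 1)
      exact wdist_le_of_le_of_le _ _ (dist_t_parent m hm0) (ih _ (by simp only; omega))
        (by omega)

lemma dist_t_root (m : Fin (2 ^ (h + 1) - 1)) : δ (.t m : GV h s ℓ) root ≤ h :=
  dist_t_root_le h m (by omega)

lemma dist_root_leaf (k : ℕ) (hk : k < 2 ^ h) : δ (root : GV h s ℓ) (leaf k hk) ≤ h := by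
  rw [dist_comm]
  exact dist_t_root_le h _ (by simp only [pow_succ]; omega)

lemma dist_leaf_p (r : Fin (2 * s + ℓ)) (j : Fin (2 ^ h)) : δ (leaf j j.isLt) (.p r j) ≤ α :=
  dist_le_of_adj0 (by simp only [leaf, gadgetAdj0]; omega) le_rfl

lemma dist_root_pathFirst (r : Fin (2 * s + ℓ)) :
    δ (root : GV h s ℓ) (pathFirst r) ≤ (h + α : ℕ) :=
  wdist_le_of_le_of_le _ _ (dist_root_leaf 0 _) (dist_leaf_p r ⟨0, _⟩) le_rfl

lemma dist_pathFirst_pathFirst (r r' : Fin (2 * s + ℓ)) :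
    δ (pathFirst r : GV h s ℓ) (pathFirst r') ≤ (2 * α : ℕ) :=
  wdist_le_of_le_of_le _ _ ((dist_comm _ _).trans_le (dist_leaf_p r ⟨0, Nat.two_pow_pos h⟩))
    (dist_leaf_p r' ⟨0, Nat.two_pow_pos h⟩) (by omega)

lemma dist_ah_pathFirst (z : Bool) (jj : Fin s) :
    δ (.ah z jj : GV h s ℓ) (pathFirst (bitRow z jj)) ≤ (1 : ℕ) :=
  dist_le_of_adj0 ⟨rfl, rfl⟩ le_rfl

lemma dist_bh_pathLast (z : Bool) (jj : Fin s) :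
    δ (.bh (!z) jj : GV h s ℓ) (pathLast (bitRow z jj)) ≤ (1 : ℕ) :=
  dist_le_of_adj0 ⟨by cases z <;> rfl, rfl⟩ le_rfl

lemma dist_as_pathFirst (j : Fin ℓ) : δ (.as j : GV h s ℓ) (pathFirst (starRow j)) ≤ (1 : ℕ) :=
  dist_le_of_adj0 ⟨rfl, rfl⟩ le_rfl

lemma dist_bs_pathLast (j : Fin ℓ) : δ (.bs j : GV h s ℓ) (pathLast (starRow j)) ≤ (1 : ℕ) :=
  dist_le_of_adj0 ⟨rfl, rfl⟩ le_rfl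

lemma dist_a_a (i i' : Fin (2 ^ s)) : δ (.a i : GV h s ℓ) (.a i') ≤ α := by
  obtain rfl | hne := eq_or_ne i i'
  · simp [wdist_self]
  · exact dist_le_of_adj0 hne le_rfl

lemma dist_b_b (i i' : Fin (2 ^ s)) : δ (.b i : GV h s ℓ) (.b i') ≤ α := by
  obtain rfl | hne := eq_or_ne i i'
  · simp [wdist_self]
  · exact dist_le_of_adj0 hne le_rfl

lemma dist_a_ah_of_testBit {i : Fin (2 ^ s)} {z : Bool} {jj : Fin s}
    (hz : i.val.testBit jj = z) : δ (.a i : GV h s ℓ) (.ah z jj) ≤ α :=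
  dist_le_of_adj0 hz.symm le_rfl

lemma dist_b_bh_of_testBit {i : Fin (2 ^ s)} {z : Bool} {jj : Fin s}
    (hz : i.val.testBit jj = z) : δ (.b i : GV h s ℓ) (.bh z jj) ≤ α :=
  dist_le_of_adj0 hz.symm le_rfl

lemma dist_a_ah (i : Fin (2 ^ s)) (z : Bool) (jj : Fin s) :
    δ (.a i : GV h s ℓ) (.ah z jj) ≤ (2 * α : ℕ) := by
  obtain ⟨i', hi'⟩ := exists_testBit_eq z jj
  exact wdist_le_of_le_of_le _ _ (dist_a_a i i') (dist_a_ah_of_testBit hi') (by omega)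

lemma dist_b_bh (i : Fin (2 ^ s)) (z : Bool) (jj : Fin s) :
    δ (.b i : GV h s ℓ) (.bh z jj) ≤ (2 * α : ℕ) := by
  obtain ⟨i', hi'⟩ := exists_testBit_eq z jj
  exact wdist_le_of_le_of_le _ _ (dist_b_b i i') (dist_b_bh_of_testBit hi') (by omega)

lemma dist_a_as (i : Fin (2 ^ s)) (j : Fin ℓ) :
    δ (.a i : GV h s ℓ) (.as j) ≤ (if x i j then α else β : ℕ) :=
  dist_le_of_adj0 trivial le_rfl

lemma dist_b_bs (i : Fin (2 ^ s)) (j : Fin ℓ) :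
    δ (.b i : GV h s ℓ) (.bs j) ≤ (if y i j then α else β : ℕ) :=
  dist_le_of_adj0 trivial le_rfl

lemma dist_a_pathFirst (i : Fin (2 ^ s)) (r : Fin (2 * s + ℓ)) :
    δ (.a i : GV h s ℓ) (pathFirst r) ≤ (max (2 * α) β + 1 : ℕ) := by
  rcases row_cases r with ⟨z, jj, rfl⟩ | ⟨j, rfl⟩
  · exact wdist_le_of_le_of_le _ _ (dist_a_ah i z jj) (dist_ah_pathFirst z jj) (by omega)
  · exact wdist_le_of_le_of_le _ _ (dist_a_as i j) (dist_as_pathFirst j) (by split_ifs <;> omega)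

lemma dist_b_pathLast (i : Fin (2 ^ s)) (r : Fin (2 * s + ℓ)) :
    δ (.b i : GV h s ℓ) (pathLast r) ≤ (max (2 * α) β + 1 : ℕ) := by
  rcases row_cases r with ⟨z, jj, rfl⟩ | ⟨j, rfl⟩
  · exact wdist_le_of_le_of_le _ _ (dist_b_bh i (!z) jj) (dist_bh_pathLast z jj) (by omega)
  · exact wdist_le_of_le_of_le _ _ (dist_b_bs i j) (dist_bs_pathLast j) (by split_ifs <;> omega)

lemma dist_b_pathFirst (i : Fin (2 ^ s)) (r : Fin (2 * s + ℓ)) :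
    δ (.b i : GV h s ℓ) (pathFirst r) ≤ (max (2 * α) β + 2 ^ h : ℕ) :=
  wdist_le_of_le_of_le _ _ (dist_b_pathLast i r) (dist_pathLast_pathFirst r)
    (by have := Nat.one_le_two_pow (n := h); omega)

lemma exists_dist_a_pathFirst_le (hs : 1 ≤ s) (i : Fin (2 ^ s)) :
    ∃ r, δ (.a i : GV h s ℓ) (pathFirst r) ≤ (α + 1 : ℕ) :=
  ⟨bitRow (i.val.testBit 0) ⟨0, hs⟩,
    wdist_le_of_le_of_le _ _ (dist_a_ah_of_testBit rfl) (dist_ah_pathFirst _ _) le_rfl⟩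

lemma exists_dist_b_pathFirst_le (hs : 1 ≤ s) (i : Fin (2 ^ s)) :
    ∃ r, δ (.b i : GV h s ℓ) (pathFirst r) ≤ (α + 2 ^ h : ℕ) := by
  refine ⟨bitRow (!i.val.testBit 0) ⟨0, hs⟩, ?_⟩
  have hb : δ (.b i : GV h s ℓ) (pathLast (bitRow (!i.val.testBit 0) ⟨0, hs⟩)) ≤ (α + 1 : ℕ) :=
    wdist_le_of_le_of_le _ _ (dist_b_bh_of_testBit (Bool.not_not _).symm)
      (dist_bh_pathLast _ _) le_rfl
  exact wdist_le_of_le_of_le _ _ hb (dist_pathLast_pathFirst _)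
    (by have := Nat.one_le_two_pow (n := h); omega)

lemma near_pathFirst_or_t_or_a_or_b (v : GV h s ℓ) :
    (∃ r, δ v (pathFirst r) ≤ (2 ^ h : ℕ)) ∨ (∃ m, v = .t m) ∨ (∃ i, v = .a i) ∨
      ∃ i, v = .b i := by
  have := Nat.one_le_two_pow (n := h)
  cases v with
  | t m => exact Or.inr (Or.inl ⟨m, rfl⟩)
  | a i => exact Or.inr (Or.inr (Or.inl ⟨i, rfl⟩))
  | b i => exact Or.inr (Or.inr (Or.inr ⟨i, rfl⟩))
  | p r j => exact Or.inl ⟨r, dist_le_of_le (dist_p_pathFirst r j j.isLt) j.isLt.le⟩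
  | ah z jj => exact Or.inl ⟨_, dist_le_of_le (dist_ah_pathFirst z jj) this⟩
  | as j => exact Or.inl ⟨_, dist_le_of_le (dist_as_pathFirst j) this⟩
  | bh z jj =>
    refine Or.inl ⟨bitRow (!z) jj,
      wdist_le_of_le_of_le (a := 1) _ _ ?_ (dist_pathLast_pathFirst _) (by omega)⟩
    simpa using dist_bh_pathLast (x := x) (y := y) (α := α) (β := β) (!z) jj
  | bs j =>
    exact Or.inl ⟨_, wdist_le_of_le_of_le _ _ (dist_bs_pathLast j)
      (dist_pathLast_pathFirst _) (by omega)⟩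

lemma dist_a_b (hF : ∀ i : Fin (2 ^ s), ∃ j : Fin ℓ, x i j = true ∧ y i j = true)
    (i i' : Fin (2 ^ s)) : δ (.a i : GV h s ℓ) (.b i') ≤ (2 * α + 2 ^ h + 1 : ℕ) := by
  obtain ⟨r, hr, hr'⟩ : ∃ r, δ (.a i : GV h s ℓ) (pathFirst r) ≤ (α + 1 : ℕ) ∧
      δ (.b i' : GV h s ℓ) (pathLast r) ≤ (α + 1 : ℕ) := by
    obtain rfl | hne := eq_or_ne i i'
    · obtain ⟨j, hx, hy⟩ := hF i
      exact ⟨starRow j,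
        wdist_le_of_le_of_le _ _ (dist_a_as i j) (dist_as_pathFirst j) (by simp [hx]),
        wdist_le_of_le_of_le _ _ (dist_b_bs i j) (dist_bs_pathLast j) (by simp [hy])⟩
    · obtain ⟨jj, hjj⟩ := exists_testBit_ne hne
      exact ⟨bitRow (i.val.testBit jj) jj,
        wdist_le_of_le_of_le _ _ (dist_a_ah_of_testBit rfl) (dist_ah_pathFirst _ _) le_rfl,
        wdist_le_of_le_of_le _ _ (dist_b_bh_of_testBit (Bool.eq_not_iff.mpr hjj.symm))
          (dist_bh_pathLast _ _) le_rfl⟩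
  exact wdist_le_of_le_of_le _ _
    (wdist_le_of_le_of_le _ _ hr ((dist_comm _ _).trans_le (dist_pathLast_pathFirst r)) le_rfl)
    ((dist_comm _ _).trans_le hr') (by have := Nat.one_le_two_pow (n := h); omega)

lemma dist_root_le (hs : 1 ≤ s) (v : GV h s ℓ) : δ root v ≤ (h + 2 * α + 2 ^ h : ℕ) := by
  have := Nat.one_le_two_pow (n := h)
  rcases near_pathFirst_or_t_or_a_or_b v with ⟨r, hv⟩ | ⟨m, rfl⟩ | ⟨i, rfl⟩ | ⟨i, rfl⟩
  · exact wdist_le_of_le_of_le _ _ (dist_root_pathFirst r) ((dist_comm _ _).trans_le hv)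
      (by omega)
  · exact dist_le_of_le ((dist_comm _ _).trans_le (dist_t_root m)) (by omega)
  · obtain ⟨r, hr⟩ := exists_dist_a_pathFirst_le hs i
    exact wdist_le_of_le_of_le _ _ (dist_root_pathFirst r) ((dist_comm _ _).trans_le hr)
      (by omega)
  · obtain ⟨r, hr⟩ := exists_dist_b_pathFirst_le hs i
    exact wdist_le_of_le_of_le _ _ (dist_root_pathFirst r) ((dist_comm _ _).trans_le hr)
      (by omega)

lemma dist_t_le (hs : 1 ≤ s) (m : Fin (2 ^ (h + 1) - 1)) (v : GV h s ℓ) :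
    δ (.t m) v ≤ (2 * h + 2 * α + 2 ^ h : ℕ) :=
  wdist_le_of_le_of_le _ _ (dist_t_root m) (dist_root_le hs v) (by omega)

lemma dist_le_max_add_of_near (hs : 1 ≤ s) {u : GV h s ℓ} {r : Fin (2 * s + ℓ)}
    (hu : δ u (pathFirst r) ≤ (2 ^ h : ℕ)) (v : GV h s ℓ) :
    δ u v ≤ (max (2 * α) β + (2 * 2 ^ h + 2 * h + 1) : ℕ) := by
  rcases near_pathFirst_or_t_or_a_or_b v with ⟨r', hv⟩ | ⟨m, rfl⟩ | ⟨i, rfl⟩ | ⟨i, rfl⟩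
  · exact wdist_le_of_le_of_le _ _ (wdist_le_of_le_of_le _ _ hu (dist_pathFirst_pathFirst r r')
      le_rfl) ((dist_comm _ _).trans_le hv) (by omega)
  · exact dist_le_of_le ((dist_comm _ _).trans_le (dist_t_le hs m u)) (by omega)
  · exact wdist_le_of_le_of_le _ _ hu ((dist_comm _ _).trans_le (dist_a_pathFirst i r))
      (by omega)
  · exact wdist_le_of_le_of_le _ _ hu ((dist_comm _ _).trans_le (dist_b_pathFirst i r))
      (by omega)

lemma dist_le_max_add (hs : 1 ≤ s)
    (hF : ∀ i : Fin (2 ^ s), ∃ j : Fin ℓ, x i j = true ∧ y i j = true) (u v : GV h s ℓ) :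
    δ u v ≤ (max (2 * α) β + (2 * 2 ^ h + 2 * h + 1) : ℕ) := by
  rcases near_pathFirst_or_t_or_a_or_b u with ⟨r, hu⟩ | ⟨m, rfl⟩ | ⟨i, rfl⟩ | ⟨i, rfl⟩
  · exact dist_le_max_add_of_near hs hu v
  · exact dist_le_of_le (dist_t_le hs m v) (by omega)
  all_goals rcases near_pathFirst_or_t_or_a_or_b v with ⟨r, hv⟩ | ⟨m, rfl⟩ | ⟨i', rfl⟩ | ⟨i', rfl⟩
  · exact (dist_comm _ _).trans_le (dist_le_max_add_of_near hs hv _)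
  · exact (dist_comm _ _).trans_le (dist_le_of_le (dist_t_le hs m _) (by omega))
  · exact dist_le_of_le (dist_a_a i i') (by omega)
  · exact dist_le_of_le (dist_a_b hF i i') (by omega)
  · exact (dist_comm _ _).trans_le (dist_le_max_add_of_near hs hv _)
  · exact (dist_comm _ _).trans_le (dist_le_of_le (dist_t_le hs m _) (by omega))
  · exact dist_le_of_le ((dist_comm _ _).trans_le (dist_a_b hF i' i)) (by omega)
  · exact dist_le_of_le (dist_b_b i i') (by omega)

end Distances

section Potential

variable (y : Fin (2 ^ s) → Fin ℓ → Bool) (α β : ℕ) (i₀ : Fin (2 ^ s))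

def bitPotential (z : Bool) (jj : Fin s) : ℕ :=
  if i₀.val.testBit jj = z then α else min (α + β) (3 * α) - α

def starPotential (j : Fin ℓ) : ℕ :=
  if y i₀ j then min (α + β) (3 * α) - α else α

def rowPotential (r : Fin (2 * s + ℓ)) : ℕ :=
  if hr : r.val < 2 * s then bitPotential α β i₀ (decide (r.val % 2 = 1)) ⟨r.val / 2, by omega⟩
  else starPotential y α β i₀ ⟨r.val - 2 * s, by omega⟩

/-- With `M = min (α + β) (3α)`: `0` at `a i₀`, `M` at `b i₀`, and constant on each path,
namely `M - α` if the `b`-end of the path is joined to `b i₀` by an edge of weight `α`, and `α`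
otherwise. -/
def potential : GV h s ℓ → ℕ
  | .t _ => α
  | .p r _ => rowPotential y α β i₀ r
  | .a i => if i = i₀ then 0 else α
  | .b i => if i = i₀ then min (α + β) (3 * α) else min (α + β) (3 * α) - α
  | .ah z jj => bitPotential α β i₀ z jj
  | .bh z jj => bitPotential α β i₀ (!z) jj
  | .as j => starPotential y α β i₀ j
  | .bs j => starPotential y α β i₀ j

lemma bitPotential_eq_or (z : Bool) (jj : Fin s) :
    bitPotential α β i₀ z jj = α ∨ bitPotential α β i₀ z jj = min (α + β) (3 * α) - α := by
  unfold bitPotential; split_ifs <;> simp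

lemma starPotential_eq_or (j : Fin ℓ) :
    starPotential y α β i₀ j = α ∨ starPotential y α β i₀ j = min (α + β) (3 * α) - α := by
  unfold starPotential; split_ifs <;> simp

lemma rowPotential_bitRow (z : Bool) (jj : Fin s) :
    rowPotential y α β i₀ (bitRow z jj) = bitPotential α β i₀ z jj := by
  have := jj.isLt
  rw [rowPotential, dif_pos (by simp only [bitRow]; split <;> omega)]
  congr 1
  · cases z <;> simp [bitRow]
  · ext
    cases z <;> simp [bitRow]
    omega

lemma rowPotential_starRow (j : Fin ℓ) :
    rowPotential y α β i₀ (starRow j) = starPotential y α β i₀ j := by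
  simp [rowPotential, starRow]

lemma rowPotential_eq_or (r : Fin (2 * s + ℓ)) :
    rowPotential y α β i₀ r = α ∨ rowPotential y α β i₀ r = min (α + β) (3 * α) - α := by
  rcases row_cases r with ⟨z, jj, rfl⟩ | ⟨j, rfl⟩
  · rw [rowPotential_bitRow]; exact bitPotential_eq_or α β i₀ z jj
  · rw [rowPotential_starRow]; exact starPotential_eq_or y α β i₀ j

variable (x : Fin (2 ^ s) → Fin ℓ → Bool)

lemma potential_le_add_gadgetW_a (hαβ : α ≤ β) (hbad : ¬∃ j, x i₀ j = true ∧ y i₀ j = true)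
    (i : Fin (2 ^ s)) {v : GV h s ℓ} (hv : gadgetAdj0 (.a i) v) :
    potential y α β i₀ v ≤ potential y α β i₀ (.a i : GV h s ℓ) + gadgetW x y α β (.a i) v ∧
      potential y α β i₀ (.a i : GV h s ℓ) ≤ potential y α β i₀ v + gadgetW x y α β (.a i) v := by
  rcases v with _ | _ | _ | _ | ⟨z, jj⟩ | _ | j <;> try exact hv.elim
  · simp only [potential, gadgetW]; split_ifs <;> omega
  · have := bitPotential_eq_or α β i₀ z jj
    by_cases hi : i = i₀
    · have hz : i.val.testBit jj = z := hv.symm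
      subst hi; simp [potential, gadgetW, bitPotential, hz]
    · simp only [potential, gadgetW, if_neg hi]; omega
  · have := starPotential_eq_or y α β i₀ j
    by_cases hi : i = i₀
    · subst hi
      cases hy : y i j
      · simp [potential, gadgetW, starPotential, hy]; split_ifs <;> omega
      · have hx : x i j = false := Bool.eq_false_iff.mpr fun hx => hbad ⟨j, hx, hy⟩
        simp [potential, gadgetW, starPotential, hx, hy]; omega
    · simp only [potential, gadgetW, if_neg hi]; split_ifs <;> omega

lemma potential_le_add_gadgetW_b (hαβ : α ≤ β) (i : Fin (2 ^ s)) {v : GV h s ℓ}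
    (hv : gadgetAdj0 (.b i) v) :
    potential y α β i₀ v ≤ potential y α β i₀ (.b i : GV h s ℓ) + gadgetW x y α β (.b i) v ∧
      potential y α β i₀ (.b i : GV h s ℓ) ≤ potential y α β i₀ v + gadgetW x y α β (.b i) v := by
  rcases v with _ | _ | _ | _ | _ | ⟨z, jj⟩ | _ | j <;> try exact hv.elim
  · simp only [potential, gadgetW]; split_ifs <;> omega
  · have := bitPotential_eq_or α β i₀ (!z) jj
    by_cases hi : i = i₀
    · have hz : i.val.testBit jj = z := hv.symm
      subst hi; simp [potential, gadgetW, bitPotential, hz]; omega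
    · simp only [potential, gadgetW, if_neg hi]; omega
  · have := starPotential_eq_or y α β i₀ j
    by_cases hi : i = i₀
    · subst hi
      cases hy : y i j <;> simp [potential, gadgetW, starPotential, hy] <;> omega
    · simp only [potential, gadgetW, if_neg hi]; split_ifs <;> omega

lemma potential_le_add_gadgetW (hαβ : α ≤ β) (hbad : ¬∃ j, x i₀ j = true ∧ y i₀ j = true)
    {u v : GV h s ℓ} (huv : gadgetAdj0 u v) :
    potential y α β i₀ v ≤ potential y α β i₀ u + gadgetW x y α β u v ∧
      potential y α β i₀ u ≤ potential y α β i₀ v + gadgetW x y α β u v := by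
  rcases u with m | ⟨r, j⟩ | i | i | ⟨z, jj⟩ | ⟨z, jj⟩ | j | j
  · rcases v with _ | ⟨r', _⟩ <;> try exact huv.elim
    · simp only [potential, gadgetW]; omega
    · have := rowPotential_eq_or y α β i₀ r'
      simp only [potential, gadgetW]; omega
  · rcases v with _ | _ <;> try exact huv.elim
    obtain ⟨rfl, -⟩ := huv
    simp only [potential, gadgetW]; omega
  · exact potential_le_add_gadgetW_a y α β i₀ x hαβ hbad i huv
  · exact potential_le_add_gadgetW_b y α β i₀ x hαβ i huv
  all_goals rcases v with _ | ⟨r', _⟩ <;> try exact huv.elim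
  · obtain rfl : r' = bitRow z jj := Fin.ext huv.1
    simp [potential, gadgetW, rowPotential_bitRow]
  · obtain rfl : r' = bitRow (!z) jj := Fin.ext (huv.1.trans (by cases z <;> rfl))
    simp [potential, gadgetW, rowPotential_bitRow]
  all_goals obtain rfl : r' = starRow j := Fin.ext huv.1
  all_goals simp [potential, gadgetW, rowPotential_starRow]

lemma min_le_wdist_a_b (hαβ : α ≤ β) (hbad : ¬∃ j, x i₀ j = true ∧ y i₀ j = true) :
    ((min (α + β) (3 * α) : ℕ) : ℝ≥0∞) ≤
      wdist (gadget h s ℓ) (fun u v => ((gadgetW x y α β u v : ℕ) : ℝ≥0∞)) (.a i₀) (.b i₀) := by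
  have key := le_add_wdist_of_forall_adj (gadget h s ℓ)
    (fun u v => ((gadgetW x y α β u v : ℕ) : ℝ≥0∞)) (fun v => (potential y α β i₀ v : ℝ≥0∞)) ?_
    (.a i₀) (.b i₀)
  · simpa [potential] using key
  rintro u v ⟨-, huv | huv⟩
  · exact_mod_cast (potential_le_add_gadgetW y α β i₀ x hαβ hbad huv).1
  · rw [gadgetW_comm]
    exact_mod_cast (potential_le_add_gadgetW y α β i₀ x hαβ hbad huv).2

end Potential

lemma le_card_GV (hs : 1 ≤ s) : 2 * 2 ^ h + 2 * h + 1 ≤ Fintype.card (GV h s ℓ) := by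
  have hinj : Function.Injective
      (Sum.elim (fun q => GV.p q.1 q.2) GV.t :
        (Fin (2 * s + ℓ) × Fin (2 ^ h)) ⊕ Fin (2 ^ (h + 1) - 1) → GV h s ℓ) := by
    rintro (⟨⟩ | ⟨⟩) (⟨⟩ | ⟨⟩) <;> simp [Prod.ext_iff]
  have hcard := Fintype.card_le_of_injective _ hinj
  simp only [Fintype.card_sum, Fintype.card_prod, Fintype.card_fin] at hcard
  have hpaths : 2 * 2 ^ h ≤ (2 * s + ℓ) * 2 ^ h := Nat.mul_le_mul_right _ (by omega)
  have := Nat.lt_two_pow_self (n := h)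
  have := pow_succ 2 h
  omega

end Gadget

theorem stmt3_general (h s ℓ : ℕ) (hs : 1 ≤ s)
    (α β : ℕ) (hαβ : α < β)
    (x y : Fin (2 ^ s) → Fin ℓ → Bool)
    (n : ℕ) (hn : n = Fintype.card (GV h s ℓ)) :
    ((∀ i : Fin (2 ^ s), ∃ j : Fin ℓ, x i j = true ∧ y i j = true) →
      wdiam (gadget h s ℓ) (fun u v => ((gadgetW x y α β u v : ℕ) : ℝ≥0∞)) ≤
        ((max (2 * α) β : ℕ) : ℝ≥0∞) + (n : ℝ≥0∞)) ∧
    ((¬ ∀ i : Fin (2 ^ s), ∃ j : Fin ℓ, x i j = true ∧ y i j = true) →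
      ((min (α + β) (3 * α) : ℕ) : ℝ≥0∞) ≤
        wdiam (gadget h s ℓ) (fun u v => ((gadgetW x y α β u v : ℕ) : ℝ≥0∞))) := by
  refine ⟨fun hF => iSup₂_le fun u v => ?_, fun hF => ?_⟩
  · calc _ ≤ ((max (2 * α) β + (2 * 2 ^ h + 2 * h + 1) : ℕ) : ℝ≥0∞) :=
          Gadget.dist_le_max_add hs hF u v
      _ ≤ _ := by rw [hn]; exact_mod_cast Nat.add_le_add_left (Gadget.le_card_GV hs) _
  · obtain ⟨i₀, hbad⟩ := not_forall.mp hF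
    exact (Gadget.min_le_wdist_a_b y α β i₀ x hαβ.le hbad).trans
      (le_iSup₂ (f := fun u v => wdist (gadget h s ℓ) _ u v) (.a i₀) (.b i₀))

/-- For the diameter gadget `(G,w)`: if `F(x,y)=1` then
`D_{G,w} ≤ max{2α, β} + n`, and if `F(x,y)=0` then `D_{G,w} ≥ min{α+β, 3α}`,
where `n = |V|` and `F(x,y) = ⋀_i ⋁_j (x_{i,j} ∧ y_{i,j})`. -/
theorem stmt3 (h s ℓ : ℕ) (hh : 1 ≤ h) (hs : 1 ≤ s) (hℓ : 1 ≤ ℓ)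
    (α β : ℕ) (hα : 0 < α) (hαβ : α < β)
    (x y : Fin (2 ^ s) → Fin ℓ → Bool)
    (n : ℕ) (hn : n = Fintype.card (GV h s ℓ)) :
    ((∀ i : Fin (2 ^ s), ∃ j : Fin ℓ, x i j = true ∧ y i j = true) →
      wdiam (gadget h s ℓ) (fun u v => ((gadgetW x y α β u v : ℕ) : ℝ≥0∞)) ≤
        ((max (2 * α) β : ℕ) : ℝ≥0∞) + (n : ℝ≥0∞)) ∧
    ((¬ ∀ i : Fin (2 ^ s), ∃ j : Fin ℓ, x i j = true ∧ y i j = true) →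
      ((min (α + β) (3 * α) : ℕ) : ℝ≥0∞) ≤
        wdiam (gadget h s ℓ) (fun u v => ((gadgetW x y α β u v : ℕ) : ℝ≥0∞))) :=
  stmt3_general h s ℓ hs α β hαβ x y n hn
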